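/- arXiv:1412.5341 — 3 statements merged into one kernel-verified Lean document; each statement's English description precedes it below -/
import Mathlib

section
/- Let H ∈ (0,1/2), let n ≥ 1 be an integer and let t ≥ 0, and set N = ⌊2^{n/2}t⌋. Then (1/2)·2^{−nH} Σ_{k,l=0}^{N−1} | (l+1)^{2H} − l^{2H} + |k−l|^{2H} − |k−l−1|^{2H} | ≤ 2^{−nH−1} + 2^{1+n/2} t^{2H+1}, and likewise (1/2)·2^{−nH} Σ_{k,l=0}^{N−1} | (l+1)^{2H} − l^{2H} + |k−l+1|^{2H} − |k−l|^{2H} | ≤ 2^{−nH−1} + 2^{1+n/2} t^{2H+1}. -/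
open Finset

lemma tv_sum (p : ℝ) (hp0 : 0 < p) (m N : ℕ) (hm : m ≤ N) :
    ∑ l ∈ range N, abs (|(m:ℝ) - l| ^ p - |(m:ℝ) - ((l:ℝ)+1)| ^ p)
      = (m:ℝ) ^ p + ((N:ℝ) - m) ^ p := by
  set u : ℕ → ℝ := fun l => |(m:ℝ) - l| ^ p with hu
  have hterm : ∀ l : ℕ, abs (|(m:ℝ) - l| ^ p - |(m:ℝ) - ((l:ℝ)+1)| ^ p) = |u l - u (l+1)| := by
    intro l; simp only [hu]; push_cast; ring_nf
  have hum : u m = 0 := by simp [hu, Real.zero_rpow hp0.ne']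
  have hu0 : u 0 = (m:ℝ) ^ p := by
    simp [hu, abs_of_nonneg (Nat.cast_nonneg m : (0:ℝ) ≤ (m:ℝ))]
  have huN : u N = ((N:ℝ) - m) ^ p := by
    have h : |(m:ℝ) - N| = (N:ℝ) - m := by
      rw [abs_sub_comm, abs_of_nonneg (sub_nonneg.2 (Nat.cast_le.2 hm))]
    simp only [hu, h]
  have hmono1 : ∀ l, l + 1 ≤ m → |u l - u (l+1)| = u l - u (l+1) := by
    intro l hl
    have hcast : ((l:ℝ) + 1) ≤ (m:ℝ) := by exact_mod_cast Nat.cast_le.2 hl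
    have h1 : (0:ℝ) ≤ (m:ℝ) - ((l:ℝ)+1) := by linarith
    have h2 : u (l+1) ≤ u l := by
      simp only [hu]
      push_cast
      rw [abs_of_nonneg h1, abs_of_nonneg (by linarith : (0:ℝ) ≤ (m:ℝ) - (l:ℝ))]
      exact Real.rpow_le_rpow h1 (by linarith) hp0.le
    rw [abs_of_nonneg (by linarith)]
  have hmono2 : ∀ l, m ≤ l → |u l - u (l+1)| = u (l+1) - u l := by
    intro l hl
    have hcast : (m:ℝ) ≤ (l:ℝ) := Nat.cast_le.2 hl
    have h2 : u l ≤ u (l+1) := by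
      simp only [hu]
      push_cast
      rw [abs_sub_comm, abs_of_nonneg (by linarith : (0:ℝ) ≤ (l:ℝ) - (m:ℝ)),
        abs_sub_comm, abs_of_nonneg (by linarith : (0:ℝ) ≤ (l:ℝ) + 1 - (m:ℝ))]
      exact Real.rpow_le_rpow (by linarith) (by linarith) hp0.le
    rw [abs_of_nonpos (by linarith)]
    ring
  have hsplit : ∑ l ∈ range N, |u l - u (l+1)|
      = ∑ l ∈ range m, |u l - u (l+1)| + ∑ l ∈ Ico m N, |u l - u (l+1)| := by
    simp only [range_eq_Ico]
    rw [← Finset.sum_Ico_consecutive _ (Nat.zero_le m) hm]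
  have h1 : ∑ l ∈ range m, |u l - u (l+1)| = u 0 - u m := by
    rw [← Finset.sum_range_sub' u m]
    exact Finset.sum_congr rfl fun l hl => hmono1 l (Finset.mem_range.1 hl)
  have h2 : ∑ l ∈ Ico m N, |u l - u (l+1)| = u N - u m := by
    have e1 : ∑ l ∈ Ico m N, |u l - u (l+1)| = ∑ l ∈ Ico m N, (u (l+1) - u l) :=
      Finset.sum_congr rfl fun l hl => hmono2 l (Finset.mem_Ico.1 hl).1
    have e2 : ∑ l ∈ range m, (u (l+1) - u l) + ∑ l ∈ Ico m N, (u (l+1) - u l)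
        = ∑ l ∈ range N, (u (l+1) - u l) := by
      simp only [range_eq_Ico]
      exact Finset.sum_Ico_consecutive _ (Nat.zero_le m) hm
    rw [e1]
    have t1 : ∑ l ∈ range m, (u (l+1) - u l) = u m - u 0 := Finset.sum_range_sub u m
    have t2 : ∑ l ∈ range N, (u (l+1) - u l) = u N - u 0 := Finset.sum_range_sub u N
    linarith
  calc ∑ l ∈ range N, abs (|(m:ℝ) - l| ^ p - |(m:ℝ) - ((l:ℝ)+1)| ^ p)
      = ∑ l ∈ range N, |u l - u (l+1)| := Finset.sum_congr rfl fun l _ => hterm l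
    _ = (m:ℝ) ^ p + ((N:ℝ) - m) ^ p := by rw [hsplit, h1, h2, hu0, hum, huN]; ring

lemma tele (p : ℝ) (hp0 : 0 < p) (N : ℕ) :
    ∑ l ∈ range N, (((l:ℝ) + 1) ^ p - (l:ℝ) ^ p) = (N:ℝ) ^ p := by
  have := Finset.sum_range_sub (fun i : ℕ => (i:ℝ) ^ p) N
  simp only [Real.zero_rpow hp0.ne', Nat.cast_zero, sub_zero] at this
  rw [← this]
  apply Finset.sum_congr rfl
  intro l _
  push_cast
  ring

lemma rpow_mono (p : ℝ) (hp0 : 0 < p) {a b : ℝ} (ha : 0 ≤ a) (hab : a ≤ b) :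
    a ^ p ≤ b ^ p := Real.rpow_le_rpow ha hab hp0.le

lemma inner_bound (p : ℝ) (hp0 : 0 < p) (N k m : ℕ) (hk : k < N) (hm : m ≤ N)
    (B : ℕ → ℝ) (hB : ∀ l : ℕ, B l = |(m:ℝ) - l| ^ p - |(m:ℝ) - ((l:ℝ)+1)| ^ p) :
    ∑ l ∈ range N, |((l:ℝ) + 1) ^ p - (l:ℝ) ^ p + B l| ≤ 3 * (N:ℝ) ^ p := by
  have hNn : (0:ℝ) ≤ (N:ℝ) := Nat.cast_nonneg N
  have step : ∑ l ∈ range N, |((l:ℝ) + 1) ^ p - (l:ℝ) ^ p + B l|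
      ≤ ∑ l ∈ range N, ((((l:ℝ) + 1) ^ p - (l:ℝ) ^ p) + |B l|) := by
    apply Finset.sum_le_sum
    intro l _
    have hAnn : (0:ℝ) ≤ ((l:ℝ) + 1) ^ p - (l:ℝ) ^ p :=
      sub_nonneg.2 (rpow_mono p hp0 (Nat.cast_nonneg l) (by linarith))
    calc |((l:ℝ) + 1) ^ p - (l:ℝ) ^ p + B l|
        ≤ |((l:ℝ) + 1) ^ p - (l:ℝ) ^ p| + |B l| := abs_add_le _ _
      _ = (((l:ℝ) + 1) ^ p - (l:ℝ) ^ p) + |B l| := by rw [abs_of_nonneg hAnn]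
  rw [Finset.sum_add_distrib] at step
  have h1 := tele p hp0 N
  have h2 : ∑ l ∈ range N, |B l| = (m:ℝ) ^ p + ((N:ℝ) - m) ^ p := by
    rw [← tv_sum p hp0 m N hm]
    exact Finset.sum_congr rfl fun l _ => by rw [hB l]
  have h3 : (m:ℝ) ^ p ≤ (N:ℝ) ^ p :=
    rpow_mono p hp0 (Nat.cast_nonneg m) (Nat.cast_le.2 hm)
  have h4 : ((N:ℝ) - m) ^ p ≤ (N:ℝ) ^ p :=
    rpow_mono p hp0 (sub_nonneg.2 (Nat.cast_le.2 hm)) (by linarith [Nat.cast_nonneg (α := ℝ) m])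
  calc ∑ l ∈ range N, |((l:ℝ) + 1) ^ p - (l:ℝ) ^ p + B l|
      ≤ (N:ℝ) ^ p + ((m:ℝ) ^ p + ((N:ℝ) - m) ^ p) := by rw [h1, h2] at step; exact step
    _ ≤ 3 * (N:ℝ) ^ p := by linarith

lemma final_bound (H : ℝ) (hH0 : 0 < H) (n : ℕ) (t : ℝ) (ht : 0 ≤ t) (S : ℝ)
    (hS : S ≤ 3 * ((Nat.floor ((2:ℝ) ^ ((n:ℝ)/2) * t) : ℝ)) *
      ((Nat.floor ((2:ℝ) ^ ((n:ℝ)/2) * t) : ℝ)) ^ (2*H)) :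
    1/2 * (2:ℝ) ^ (-(n:ℝ)*H) * S
      ≤ (2:ℝ) ^ (-(n:ℝ)*H - 1) + (2:ℝ) ^ (1 + (n:ℝ)/2) * t ^ (2*H + 1) := by
  set N : ℕ := Nat.floor ((2:ℝ) ^ ((n:ℝ)/2) * t) with hN
  set Bv : ℝ := (2:ℝ) ^ ((n:ℝ)/2) * t with hBv
  have hBnn : 0 ≤ Bv := by positivity
  have hNB : (N:ℝ) ≤ Bv := Nat.floor_le hBnn
  have hNp : (N:ℝ) ^ (2*H) ≤ Bv ^ (2*H) :=
    Real.rpow_le_rpow (Nat.cast_nonneg N) hNB (by linarith)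
  have hc : (0:ℝ) < (2:ℝ) ^ (-(n:ℝ)*H) := Real.rpow_pos_of_pos two_pos _
  have hS2 : S ≤ 3 * Bv * Bv ^ (2*H) := by
    have : 3 * ((N:ℝ)) * ((N:ℝ)) ^ (2*H) ≤ 3 * Bv * Bv ^ (2*H) := by
      apply mul_le_mul (by linarith) hNp (Real.rpow_nonneg (Nat.cast_nonneg N) _) (by positivity)
    linarith
  have key : 1/2 * (2:ℝ) ^ (-(n:ℝ)*H) * (3 * Bv * Bv ^ (2*H))
      ≤ (2:ℝ) ^ (1 + (n:ℝ)/2) * t ^ (2*H + 1) := by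
    have e1 : Bv ^ (2*H) = (2:ℝ) ^ (((n:ℝ)/2) * (2*H)) * t ^ (2*H) := by
      rw [hBv, Real.mul_rpow (by positivity) ht, ← Real.rpow_mul (by norm_num)]
    have e2 : t ^ (2*H + 1) = t ^ (2*H) * t := by
      rw [Real.rpow_add' ht (by linarith), Real.rpow_one]
    have e3 : (2:ℝ) ^ (-(n:ℝ)*H) * ((2:ℝ) ^ ((n:ℝ)/2) * (2:ℝ) ^ (((n:ℝ)/2) * (2*H)))
        = (2:ℝ) ^ ((n:ℝ)/2) := by
      rw [← Real.rpow_add two_pos, ← Real.rpow_add two_pos]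
      congr 1
      ring
    have e4 : (2:ℝ) ^ (1 + (n:ℝ)/2) = 2 * (2:ℝ) ^ ((n:ℝ)/2) := by
      rw [Real.rpow_add two_pos, Real.rpow_one]
    have htp : 0 ≤ t ^ (2*H) := Real.rpow_nonneg ht _
    have h2p : (0:ℝ) < (2:ℝ) ^ ((n:ℝ)/2) := Real.rpow_pos_of_pos two_pos _
    calc 1/2 * (2:ℝ) ^ (-(n:ℝ)*H) * (3 * Bv * Bv ^ (2*H))
        = 3/2 * ((2:ℝ) ^ (-(n:ℝ)*H) * ((2:ℝ) ^ ((n:ℝ)/2) * (2:ℝ) ^ (((n:ℝ)/2) * (2*H)))) *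
            (t ^ (2*H) * t) := by rw [e1, hBv]; ring
      _ = 3/2 * (2:ℝ) ^ ((n:ℝ)/2) * (t ^ (2*H) * t) := by rw [e3]
      _ ≤ 2 * (2:ℝ) ^ ((n:ℝ)/2) * (t ^ (2*H) * t) := by nlinarith [mul_nonneg htp ht]
      _ = (2:ℝ) ^ (1 + (n:ℝ)/2) * t ^ (2*H + 1) := by rw [e4, e2]
  have hpos : (0:ℝ) ≤ (2:ℝ) ^ (-(n:ℝ)*H - 1) := (Real.rpow_pos_of_pos two_pos _).le
  nlinarith [hc.le, mul_le_mul_of_nonneg_left hS2 (by linarith : (0:ℝ) ≤ 1/2 * (2:ℝ) ^ (-(n:ℝ)*H))]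

theorem eps_delta_covariance_sum_bound (H : ℝ) (hH0 : 0 < H) (hH : H < 1 / 2)
    (n : ℕ) (hn : 1 ≤ n) (t : ℝ) (ht : 0 ≤ t) :
    (1 / 2 * (2 : ℝ) ^ (-(n : ℝ) * H) *
        (∑ k ∈ Finset.range (Nat.floor ((2 : ℝ) ^ ((n : ℝ) / 2) * t)),
          ∑ l ∈ Finset.range (Nat.floor ((2 : ℝ) ^ ((n : ℝ) / 2) * t)),
            abs (((l : ℝ) + 1) ^ (2 * H) - (l : ℝ) ^ (2 * H) +
              |(k : ℝ) - (l : ℝ)| ^ (2 * H) - |(k : ℝ) - (l : ℝ) - 1| ^ (2 * H))) ≤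
      (2 : ℝ) ^ (-(n : ℝ) * H - 1) + (2 : ℝ) ^ (1 + (n : ℝ) / 2) * t ^ (2 * H + 1)) ∧
    (1 / 2 * (2 : ℝ) ^ (-(n : ℝ) * H) *
        (∑ k ∈ Finset.range (Nat.floor ((2 : ℝ) ^ ((n : ℝ) / 2) * t)),
          ∑ l ∈ Finset.range (Nat.floor ((2 : ℝ) ^ ((n : ℝ) / 2) * t)),
            abs (((l : ℝ) + 1) ^ (2 * H) - (l : ℝ) ^ (2 * H) +
              |(k : ℝ) - (l : ℝ) + 1| ^ (2 * H) - |(k : ℝ) - (l : ℝ)| ^ (2 * H))) ≤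
      (2 : ℝ) ^ (-(n : ℝ) * H - 1) + (2 : ℝ) ^ (1 + (n : ℝ) / 2) * t ^ (2 * H + 1)) := by
  have hp0 : 0 < 2 * H := by linarith
  set N : ℕ := Nat.floor ((2 : ℝ) ^ ((n : ℝ) / 2) * t) with hNdef
  have sum_bound : ∀ F : ℕ → ℝ, (∀ k ∈ range N, F k ≤ 3 * (N:ℝ) ^ (2*H)) →
      ∑ k ∈ range N, F k ≤ 3 * (N:ℝ) * (N:ℝ) ^ (2*H) := by
    intro F hF
    calc ∑ k ∈ range N, F k ≤ ∑ k ∈ range N, 3 * (N:ℝ) ^ (2*H) := Finset.sum_le_sum hF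
      _ = 3 * (N:ℝ) * (N:ℝ) ^ (2*H) := by
          rw [Finset.sum_const, card_range, nsmul_eq_mul]; ring
  constructor
  · apply final_bound H hH0 n t ht
    apply sum_bound
    intro k hk
    have hk' := Finset.mem_range.1 hk
    have := inner_bound (2*H) hp0 N k k hk' hk'.le
      (fun l => |(k:ℝ) - (l:ℝ)| ^ (2*H) - |(k:ℝ) - (l:ℝ) - 1| ^ (2*H))
      (fun l => by simp only [sub_sub])
    refine le_trans (le_of_eq ?_) this
    apply Finset.sum_congr rfl
    intro l _
    congr 1
    ring
  · apply final_bound H hH0 n t ht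
    apply sum_bound
    intro k hk
    have hk' := Finset.mem_range.1 hk
    have hm : k + 1 ≤ N := hk'
    have := inner_bound (2*H) hp0 N k (k+1) hk' hm
      (fun l => |(k:ℝ) - (l:ℝ) + 1| ^ (2*H) - |(k:ℝ) - (l:ℝ)| ^ (2*H))
      (fun l => by push_cast; ring_nf)
    refine le_trans (le_of_eq ?_) this
    apply Finset.sum_congr rfl
    intro l _
    congr 1
    ring
end

section
/- Let H ∈ (0,1/2), let n ≥ 1 be an integer, let s ∈ ℝ and let t ≥ 0. Then (1/2)·2^{−nH} Σ_{j=0}^{⌊2^{n/2}t⌋−1} | (j+1)^{2H} − j^{2H} + |s·2^{n/2} − j|^{2H} − |s·2^{n/2} − j − 1|^{2H} | ≤ 2 t^{2H}. -/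
open Real

lemma my_add_rpow_le (a b p : ℝ) (ha : 0 ≤ a) (hb : 0 ≤ b) (hp : 0 ≤ p) (hp1 : p ≤ 1) :
    (a + b) ^ p ≤ a ^ p + b ^ p := by
  have h := NNReal.rpow_add_le_add_rpow (Real.toNNReal a) (Real.toNNReal b) hp hp1
  rw [← Real.toNNReal_add ha hb] at h
  have h2 := NNReal.coe_le_coe.mpr h
  rwa [NNReal.coe_add, NNReal.coe_rpow, NNReal.coe_rpow, NNReal.coe_rpow,
    Real.coe_toNNReal _ (by linarith), Real.coe_toNNReal _ ha, Real.coe_toNNReal _ hb] at h2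

lemma my_abs_rpow_sub_rpow_le (p u v : ℝ) (hp : 0 < p) (hp1 : p ≤ 1) (hu : 0 ≤ u) (hv : 0 ≤ v) :
    |u ^ p - v ^ p| ≤ |u - v| ^ p := by
  wlog h : v ≤ u generalizing u v with W
  · rw [abs_sub_comm, abs_sub_comm u v]; exact W v u hv hu (le_of_not_ge h)
  rw [abs_of_nonneg (sub_nonneg.2 (Real.rpow_le_rpow hv h hp.le)),
    abs_of_nonneg (sub_nonneg.2 h)]
  have key := my_add_rpow_le (u - v) v p (sub_nonneg.2 h) hv hp.le hp1
  rw [sub_add_cancel] at key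
  linarith

lemma my_b_sum (p x : ℝ) (hp : 0 < p) (hp1 : p ≤ 1) (N : ℕ) (hN : 1 ≤ N) :
    ∑ j ∈ Finset.range N, abs (|x - (j:ℝ)| ^ p - |x - (j:ℝ) - 1| ^ p) ≤ 3 * (N : ℝ) ^ p := by
  have hNp0 : (0:ℝ) ≤ (N:ℝ) ^ p := Real.rpow_nonneg (Nat.cast_nonneg N) p
  have hNp1 : (1:ℝ) ≤ (N:ℝ) ^ p := by
    calc (1:ℝ) = 1 ^ p := (Real.one_rpow p).symm
      _ ≤ (N:ℝ) ^ p := Real.rpow_le_rpow zero_le_one (by exact_mod_cast hN) hp.le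
  obtain ⟨k, hk⟩ : ∃ k, k = min N (Nat.ceil x) := ⟨_, rfl⟩
  have hkN : k ≤ N := hk ▸ min_le_left _ _
  obtain ⟨m, hm⟩ : ∃ m, N = k + m := ⟨N - k, (Nat.add_sub_cancel' hkN).symm⟩
  have hleft : ∑ j ∈ Finset.range k, abs (|x - (j:ℝ)| ^ p - |x - (j:ℝ) - 1| ^ p) ≤ 2 * (N:ℝ) ^ p := by
    rcases Nat.eq_zero_or_pos k with rfl | hk1
    · rw [Finset.range_zero, Finset.sum_empty]; linarith
    obtain ⟨l, rfl⟩ : ∃ l, k = l + 1 := ⟨k - 1, (Nat.succ_pred_eq_of_pos hk1).symm⟩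
    have hxpos : 0 < x := by
      have : 0 < Nat.ceil x := lt_of_lt_of_le hk1 (le_trans (le_of_eq hk) (min_le_right _ _))
      exact Nat.ceil_pos.mp this
    have hlx : (l : ℝ) ≤ x := by
      have h1 : (l + 1 : ℕ) ≤ Nat.ceil x := le_trans (le_of_eq hk) (min_le_right _ _)
      have h2 : (Nat.ceil x : ℝ) < x + 1 := Nat.ceil_lt_add_one hxpos.le
      have h3 : ((l + 1 : ℕ) : ℝ) ≤ (Nat.ceil x : ℝ) := Nat.cast_le.mpr h1
      push_cast at h3
      linarith
    rw [Finset.sum_range_succ]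
    have hlast : abs (|x - (l:ℝ)| ^ p - |x - (l:ℝ) - 1| ^ p) ≤ (N:ℝ) ^ p := by
      refine le_trans (my_abs_rpow_sub_rpow_le p _ _ hp hp1 (abs_nonneg _) (abs_nonneg _)) ?_
      have h1 : abs (|x - (l:ℝ)| - |x - (l:ℝ) - 1|) ≤ 1 := by
        have h2 := abs_abs_sub_abs_le_abs_sub (x - (l:ℝ)) (x - (l:ℝ) - 1)
        have h3 : (x - (l:ℝ)) - (x - (l:ℝ) - 1) = 1 := by ring
        rw [h3] at h2
        simpa using h2
      calc abs (|x - (l:ℝ)| - |x - (l:ℝ) - 1|) ^ p ≤ 1 ^ p :=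
            Real.rpow_le_rpow (abs_nonneg _) h1 hp.le
        _ = 1 := Real.one_rpow p
        _ ≤ (N:ℝ) ^ p := hNp1
    have hrest : ∑ j ∈ Finset.range l, abs (|x - (j:ℝ)| ^ p - |x - (j:ℝ) - 1| ^ p) ≤ (N:ℝ) ^ p := by
      have hterm : ∀ j ∈ Finset.range l, abs (|x - (j:ℝ)| ^ p - |x - (j:ℝ) - 1| ^ p) =
          (x - (j:ℝ)) ^ p - (x - ((j:ℕ) + 1 : ℕ)) ^ p := by
        intro j hj
        have hj1 : (j:ℝ) + 1 ≤ (l:ℝ) := by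
          have := Finset.mem_range.mp hj
          exact_mod_cast Nat.succ_le_of_lt this
        have h1 : 0 ≤ x - (j:ℝ) - 1 := by linarith
        have h2 : 0 ≤ x - (j:ℝ) := by linarith
        rw [abs_of_nonneg h2, abs_of_nonneg h1]
        rw [abs_of_nonneg]
        · push_cast; ring_nf
        · exact sub_nonneg.2 (Real.rpow_le_rpow h1 (by linarith) hp.le)
      rw [Finset.sum_congr rfl hterm]
      have htel := Finset.sum_range_sub' (fun j => (x - (j:ℕ)) ^ p) l
      rw [htel]
      have h0 : (x - ((0:ℕ):ℝ)) ^ p = x ^ p := by norm_num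
      rw [h0]
      calc x ^ p - (x - (l:ℕ)) ^ p ≤ |x - (x - (l:ℕ))| ^ p := by
            have := my_abs_rpow_sub_rpow_le p x (x - (l:ℕ)) hp hp1 hxpos.le (by simpa using hlx)
            exact le_trans (le_abs_self _) this
        _ = (l:ℝ) ^ p := by norm_num
        _ ≤ (N:ℝ) ^ p := Real.rpow_le_rpow (Nat.cast_nonneg l) (by exact_mod_cast le_trans (Nat.le_succ l) hkN) hp.le
    linarith
  have hright : ∑ i ∈ Finset.range m, abs (|x - ((k + i : ℕ):ℝ)| ^ p - |x - ((k + i : ℕ):ℝ) - 1| ^ p)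
      ≤ (N:ℝ) ^ p := by
    rcases Nat.eq_zero_or_pos m with rfl | hm1
    · rw [Finset.range_zero, Finset.sum_empty]; exact hNp0
    have hkceil : k = Nat.ceil x := by
      have hkltN : k < N := by omega
      rcases le_total N (Nat.ceil x) with h | h
      · rw [min_eq_left h] at hk; omega
      · rw [min_eq_right h] at hk; exact hk
    have hxk : x ≤ (k:ℝ) := by rw [hkceil]; exact Nat.le_ceil x
    have hterm : ∀ i ∈ Finset.range m, abs (|x - ((k + i : ℕ):ℝ)| ^ p - |x - ((k + i : ℕ):ℝ) - 1| ^ p)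
        = (((k + (i+1) : ℕ):ℝ) - x) ^ p - (((k + i : ℕ):ℝ) - x) ^ p := by
      intro i hi
      have h2 : x ≤ ((k + i : ℕ):ℝ) := le_trans hxk (by exact_mod_cast Nat.le_add_right k i)
      have ha : |x - ((k + i : ℕ):ℝ)| = ((k + i : ℕ):ℝ) - x := by
        rw [abs_of_nonpos (by linarith)]; ring
      have hb : |x - ((k + i : ℕ):ℝ) - 1| = ((k + (i+1) : ℕ):ℝ) - x := by
        rw [abs_of_nonpos (by push_cast; linarith)]; push_cast; ring
      rw [ha, hb, abs_of_nonpos, neg_sub]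
      refine sub_nonpos.2 (Real.rpow_le_rpow (by linarith) (by push_cast; linarith) hp.le)
    rw [Finset.sum_congr rfl hterm]
    have htel := Finset.sum_range_sub (fun i => (((k + i : ℕ):ℝ) - x) ^ p) m
    rw [htel]
    have hk0 : ((k + 0 : ℕ):ℝ) = (k:ℝ) := by norm_num
    calc (((k + m : ℕ):ℝ) - x) ^ p - (((k + 0 : ℕ):ℝ) - x) ^ p
        ≤ |(((k + m : ℕ):ℝ) - x) - (((k + 0 : ℕ):ℝ) - x)| ^ p := by
          refine le_trans (le_abs_self _) (my_abs_rpow_sub_rpow_le p _ _ hp hp1 ?_ ?_)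
          · push_cast; rw [hk0] at *; linarith
          · rw [hk0]; linarith
      _ = (m:ℝ) ^ p := by push_cast; norm_num
      _ ≤ (N:ℝ) ^ p := Real.rpow_le_rpow (Nat.cast_nonneg m) (by exact_mod_cast (by omega : m ≤ N)) hp.le
  calc ∑ j ∈ Finset.range N, abs (|x - (j:ℝ)| ^ p - |x - (j:ℝ) - 1| ^ p)
      = ∑ j ∈ Finset.range k, abs (|x - (j:ℝ)| ^ p - |x - (j:ℝ) - 1| ^ p)
        + ∑ i ∈ Finset.range m, abs (|x - ((k + i : ℕ):ℝ)| ^ p - |x - ((k + i : ℕ):ℝ) - 1| ^ p) := by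
        rw [hm, Finset.sum_range_add]
    _ ≤ 2 * (N:ℝ) ^ p + (N:ℝ) ^ p := add_le_add hleft hright
    _ = 3 * (N:ℝ) ^ p := by ring

theorem eps_s_delta_covariance_sum_bound (H : ℝ) (hH0 : 0 < H) (hH : H < 1 / 2)
    (n : ℕ) (hn : 1 ≤ n) (s t : ℝ) (ht : 0 ≤ t) :
    1 / 2 * (2 : ℝ) ^ (-(n : ℝ) * H) *
        (∑ j ∈ Finset.range (Nat.floor ((2 : ℝ) ^ ((n : ℝ) / 2) * t)),
          abs (((j : ℝ) + 1) ^ (2 * H) - (j : ℝ) ^ (2 * H) +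
            |s * (2 : ℝ) ^ ((n : ℝ) / 2) - (j : ℝ)| ^ (2 * H) -
            |s * (2 : ℝ) ^ ((n : ℝ) / 2) - (j : ℝ) - 1| ^ (2 * H))) ≤
      2 * t ^ (2 * H) := by
  set p : ℝ := 2 * H with hpdef
  have hp : 0 < p := by positivity
  have hp1 : p ≤ 1 := by rw [hpdef]; linarith
  set x : ℝ := s * (2 : ℝ) ^ ((n : ℝ) / 2) with hxdef
  set N : ℕ := Nat.floor ((2 : ℝ) ^ ((n : ℝ) / 2) * t) with hNdef
  have htp : 0 ≤ t ^ p := Real.rpow_nonneg ht p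
  have hpow : (0:ℝ) < (2 : ℝ) ^ (-(n : ℝ) * H) := Real.rpow_pos_of_pos two_pos _
  rcases Nat.eq_zero_or_pos N with h0 | hN1
  · rw [h0, Finset.range_zero, Finset.sum_empty, mul_zero]
    positivity
  -- bound the sum
  have hsum : (∑ j ∈ Finset.range N,
      abs (((j : ℝ) + 1) ^ p - (j : ℝ) ^ p + |x - (j : ℝ)| ^ p - |x - (j : ℝ) - 1| ^ p))
      ≤ 4 * (N : ℝ) ^ p := by
    have hstep : ∀ j ∈ Finset.range N,
        abs (((j : ℝ) + 1) ^ p - (j : ℝ) ^ p + |x - (j : ℝ)| ^ p - |x - (j : ℝ) - 1| ^ p)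
          ≤ (((j : ℝ) + 1) ^ p - (j : ℝ) ^ p)
            + abs (|x - (j : ℝ)| ^ p - |x - (j : ℝ) - 1| ^ p) := by
      intro j _
      have hre : ((j : ℝ) + 1) ^ p - (j : ℝ) ^ p + |x - (j : ℝ)| ^ p - |x - (j : ℝ) - 1| ^ p
          = (((j : ℝ) + 1) ^ p - (j : ℝ) ^ p) + (|x - (j : ℝ)| ^ p - |x - (j : ℝ) - 1| ^ p) := by
        ring
      rw [hre]
      refine le_trans (abs_add_le _ _) ?_
      have ha : 0 ≤ ((j : ℝ) + 1) ^ p - (j : ℝ) ^ p :=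
        sub_nonneg.2 (Real.rpow_le_rpow (Nat.cast_nonneg j) (by linarith) hp.le)
      rw [abs_of_nonneg ha]
    refine le_trans (Finset.sum_le_sum hstep) ?_
    rw [Finset.sum_add_distrib]
    have hsa : ∑ j ∈ Finset.range N, (((j : ℝ) + 1) ^ p - (j : ℝ) ^ p) = (N : ℝ) ^ p := by
      have htel := Finset.sum_range_sub (fun j : ℕ => ((j : ℕ) : ℝ) ^ p) N
      have hcongr : ∀ j ∈ Finset.range N,
          (((j : ℝ) + 1) ^ p - (j : ℝ) ^ p) = (((j + 1 : ℕ) : ℝ) ^ p - ((j : ℕ) : ℝ) ^ p) := by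
        intro j _; push_cast; ring_nf
      rw [Finset.sum_congr rfl hcongr, htel]
      rw [Nat.cast_zero, Real.zero_rpow hp.ne', sub_zero]
    have hsb := my_b_sum p x hp hp1 N hN1
    linarith
  -- convert to the final bound
  have hNle : (N : ℝ) ≤ (2 : ℝ) ^ ((n : ℝ) / 2) * t :=
    Nat.floor_le (by positivity)
  have hNp : (N : ℝ) ^ p ≤ (2 : ℝ) ^ ((n : ℝ) * H) * t ^ p := by
    calc (N : ℝ) ^ p ≤ ((2 : ℝ) ^ ((n : ℝ) / 2) * t) ^ p :=
          Real.rpow_le_rpow (Nat.cast_nonneg N) hNle hp.le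
      _ = ((2 : ℝ) ^ ((n : ℝ) / 2)) ^ p * t ^ p :=
          Real.mul_rpow (by positivity) ht
      _ = (2 : ℝ) ^ ((n : ℝ) * H) * t ^ p := by
          rw [← Real.rpow_mul two_pos.le]
          congr 2
          rw [hpdef]; ring
  have hmain : 1 / 2 * (2 : ℝ) ^ (-(n : ℝ) * H) *
      (∑ j ∈ Finset.range N,
        abs (((j : ℝ) + 1) ^ p - (j : ℝ) ^ p + |x - (j : ℝ)| ^ p - |x - (j : ℝ) - 1| ^ p))
      ≤ 1 / 2 * (2 : ℝ) ^ (-(n : ℝ) * H) * (4 * ((2 : ℝ) ^ ((n : ℝ) * H) * t ^ p)) := by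
    have h4 : (∑ j ∈ Finset.range N,
        abs (((j : ℝ) + 1) ^ p - (j : ℝ) ^ p + |x - (j : ℝ)| ^ p - |x - (j : ℝ) - 1| ^ p))
        ≤ 4 * ((2 : ℝ) ^ ((n : ℝ) * H) * t ^ p) := le_trans hsum (by linarith)
    have hc : (0:ℝ) ≤ 1 / 2 * (2 : ℝ) ^ (-(n : ℝ) * H) := by positivity
    exact mul_le_mul_of_nonneg_left h4 hc
  refine le_trans hmain (le_of_eq ?_)
  have h2 : (2 : ℝ) ^ (-(n : ℝ) * H) * (2 : ℝ) ^ ((n : ℝ) * H) = 1 := by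
    rw [← Real.rpow_add two_pos]; norm_num
  calc 1 / 2 * (2 : ℝ) ^ (-(n : ℝ) * H) * (4 * ((2 : ℝ) ^ ((n : ℝ) * H) * t ^ p))
      = 2 * ((2 : ℝ) ^ (-(n : ℝ) * H) * (2 : ℝ) ^ ((n : ℝ) * H)) * t ^ p := by ring
    _ = 2 * t ^ p := by rw [h2]; ring
end

section
/- Let x¹, x² : [0,∞) → ℝ be continuous functions, let f ∈ C_b^∞(ℝ²), set g = ∂₁₂₂f, fix t ≥ 0, and set ρ(k) = (1/2)(|k+1|^{1/3} + |k−1|^{1/3} − 2|k|^{1/3}) for k ∈ ℤ (i.e. ρ = ρ_H with H = 1/6). For n ≥ 1 and j ∈ ℕ write m_j = (((x¹_{(j+1)2^{−n/2}} + x¹_{j2^{−n/2}})/2), ((x²_{(j+1)2^{−n/2}} + x²_{j2^{−n/2}})/2)). Then, as n → ∞, (1/32)·2^{−n/2}·Σ_{j,k=0}^{⌊2^{n/2}t⌋−1} g(m_j)·g(m_k)·ρ(j−k)³ converges to κ₃² · ∫₀ᵗ g(x¹_s, x²_s)² ds, where κ₃² = (1/32) Σ_{r∈ℤ} ρ(r)³.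 -/
open Filter

noncomputable section

/-- `ρ_H(k) = (1/2)(|k+1|^{2H} + |k−1|^{2H} − 2|k|^{2H})`. -/
def rhoH (H : ℝ) (k : ℤ) : ℝ :=
  (|(k : ℝ) + 1| ^ (2 * H) + |(k : ℝ) - 1| ^ (2 * H) - 2 * |(k : ℝ)| ^ (2 * H)) / 2

/-- `g` is infinitely differentiable and bounded together with all its derivatives. -/
def CbSmooth {E : Type*} [NormedAddCommGroup E] [NormedSpace ℝ E] (g : E → ℝ) : Prop :=
  (∀ n : ℕ, ContDiff ℝ n g) ∧
  ∀ k : ℕ, ∃ M : ℝ, ∀ x : E, ‖iteratedFDeriv ℝ k g x‖ ≤ M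

/-- `f : ℝ² → ℝ` (in curried form) belongs to `C_b^∞(ℝ²)`. -/
def CbSmooth2 (f : ℝ → ℝ → ℝ) : Prop :=
  CbSmooth fun p : ℝ × ℝ => f p.1 p.2

/-- Partial derivative of `f : ℝ → ℝ → ℝ`, taken `k` times in the first variable and `l` times
in the second variable. -/
def pd (k l : ℕ) (f : ℝ → ℝ → ℝ) (x y : ℝ) : ℝ :=
  iteratedDeriv k (fun u => iteratedDeriv l (fun v => f u v) y) x

/-- The dyadic point `j·2^{−n/2}`. -/
def dyadicPt (n j : ℕ) : ℝ := (j : ℝ) * (2 : ℝ) ^ (-(n : ℝ) / 2)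

/-- The number of dyadic steps `⌊2^{n/2} t⌋`. -/
def nSteps (n : ℕ) (t : ℝ) : ℕ := Nat.floor ((2 : ℝ) ^ ((n : ℝ) / 2) * t)

/-!
Write `a_j` for `∂₁₂₂f` at the `j`-th midpoint and `d = 2^{-n/2}`. Grouping the double sum along
its diagonals `j - k = r` turns it into `∑_r ρ(r)³ · d ∑_i a_i a_{i+|r|}`. For fixed `r` the inner
term is a Riemann sum of `(∂₁₂₂f ∘ x)²` over `[0, t]`, because `a_i` and `a_{i+|r|}` sample one
uniformly continuous function of two times at points within `(|r| + 1) d` of the diagonal; it is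
also bounded by `t · sup |∂₁₂₂f|²`. Concavity of `x ↦ x^{2H}` gives `|ρ_H(k)| ≤ H (|k| - 1)^{2H-1}`,
so `∑_r |ρ(r)|³ < ∞` for `H = 1/6`, and dominated convergence in `r` concludes.
-/

open Topology Finset MeasureTheory

lemma rhoH_neg (H : ℝ) (k : ℤ) : rhoH H (-k) = rhoH H k := by
  simp only [rhoH, Int.cast_neg]
  rw [show -(k : ℝ) + 1 = -((k : ℝ) - 1) by ring, show -(k : ℝ) - 1 = -((k : ℝ) + 1) by ring,
    abs_neg, abs_neg, abs_neg]
  ring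

/-- Second differences of the concave increasing function `x ↦ x ^ (2H)` are dominated by its
first differences, and `(k + 2)^p - (k + 1)^p ≤ p (k + 1)^(p - 1)` is Bernoulli's inequality. -/
lemma abs_rhoH_nat_add_two_le {H : ℝ} (hH0 : 0 ≤ H) (hH1 : H ≤ 1 / 2) (k : ℕ) :
    |rhoH H ((k : ℤ) + 2)| ≤ H * ((k : ℝ) + 1) ^ (2 * H - 1) := by
  set p := 2 * H
  have hp0 : 0 ≤ p := by positivity
  have hp1 : p ≤ 1 := by linarith
  have hk : (0 : ℝ) < k + 1 := by positivity
  have hρ : rhoH H ((k : ℤ) + 2) =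
      (((k : ℝ) + 3) ^ p - ((k : ℝ) + 2) ^ p - (((k : ℝ) + 2) ^ p - ((k : ℝ) + 1) ^ p)) / 2 := by
    simp only [rhoH]
    push_cast
    rw [show (k : ℝ) + 2 + 1 = k + 3 by ring, show (k : ℝ) + 2 - 1 = k + 1 by ring,
      abs_of_nonneg (by positivity), abs_of_nonneg (by positivity), abs_of_nonneg (by positivity)]
    ring
  have hconc : ((k : ℝ) + 3) ^ p - ((k : ℝ) + 2) ^ p ≤ ((k : ℝ) + 2) ^ p - ((k : ℝ) + 1) ^ p := by
    have := (Real.concaveOn_rpow hp0 hp1).slope_anti_adjacent (x := (k : ℝ) + 1)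
      (y := (k : ℝ) + 2) (z := (k : ℝ) + 3) (by simp; positivity) (by simp; positivity)
      (by linarith) (by linarith)
    norm_num at this
    linarith
  have hmono : ∀ a b : ℝ, 0 ≤ a → a ≤ b → a ^ p ≤ b ^ p := fun a b ha hab =>
    Real.rpow_le_rpow ha hab hp0
  have hbern : ((k : ℝ) + 2) ^ p - ((k : ℝ) + 1) ^ p ≤ p * ((k : ℝ) + 1) ^ (p - 1) := by
    have h := rpow_one_add_le_one_add_mul_self (s := ((k : ℝ) + 1)⁻¹) (by
      have : 0 ≤ ((k : ℝ) + 1)⁻¹ := by positivity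
      linarith) hp0 hp1
    have hsplit : (k : ℝ) + 2 = ((k : ℝ) + 1) * (1 + ((k : ℝ) + 1)⁻¹) := by field_simp; ring
    rw [hsplit, Real.mul_rpow hk.le (by positivity), Real.rpow_sub_one hk.ne']
    have := mul_le_mul_of_nonneg_left h (Real.rpow_nonneg hk.le p)
    rw [mul_add, mul_one] at this
    calc _ ≤ ((k : ℝ) + 1) ^ p * (p * ((k : ℝ) + 1)⁻¹) := by linarith
      _ = _ := by ring
  have h1 := hmono ((k : ℝ) + 2) ((k : ℝ) + 3) (by positivity) (by linarith)
  have h2 := hmono ((k : ℝ) + 1) ((k : ℝ) + 2) (by positivity) (by linarith)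
  rw [hρ, abs_le]
  constructor <;> nlinarith

lemma summable_abs_rhoH_pow_three {H : ℝ} (hH0 : 0 ≤ H) (hH1 : H < 1 / 3) :
    Summable fun r : ℤ => |rhoH H r| ^ 3 := by
  have hnat : Summable fun k : ℕ => |rhoH H k| ^ 3 := by
    rw [← summable_nat_add_iff 2]
    have hdom : Summable fun k : ℕ => H ^ 3 * ((k : ℝ) + 1) ^ ((2 * H - 1) * 3) := by
      have hexp : (2 * H - 1) * 3 < -1 := by linarith
      simpa using ((summable_nat_add_iff 1).2 (Real.summable_nat_rpow.2 hexp)).mul_left (H ^ 3)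
    refine hdom.of_nonneg_of_le (fun _ => by positivity) fun k => ?_
    have hk : (0 : ℝ) ≤ (k : ℝ) + 1 := by positivity
    calc |rhoH H ((k + 2 : ℕ) : ℤ)| ^ 3 ≤ (H * ((k : ℝ) + 1) ^ (2 * H - 1)) ^ 3 := by
          push_cast
          exact pow_le_pow_left₀ (abs_nonneg _) (abs_rhoH_nat_add_two_le hH0 (by linarith) k) 3
      _ = H ^ 3 * ((k : ℝ) + 1) ^ ((2 * H - 1) * 3) := by
          rw [mul_pow, Real.rpow_mul hk, ← Real.rpow_natCast]; norm_num
  exact .of_nat_of_neg hnat (by simpa only [rhoH_neg] using hnat)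

def dirDeriv {E : Type*} [NormedAddCommGroup E] [NormedSpace ℝ E] (v : E) (F : E → ℝ) (p : E) :
    ℝ :=
  fderiv ℝ F p v

namespace CbSmooth

variable {E : Type*} [NormedAddCommGroup E] [NormedSpace ℝ E] {F : E → ℝ}

lemma differentiable (hF : CbSmooth F) : Differentiable ℝ F :=
  (hF.1 1).differentiable one_ne_zero

lemma continuous (hF : CbSmooth F) : Continuous F :=
  (hF.1 0).continuous

lemma exists_abs_le (hF : CbSmooth F) : ∃ M, ∀ p, |F p| ≤ M := by
  obtain ⟨M, hM⟩ := hF.2 0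
  exact ⟨M, fun p => by simpa using hM p⟩

lemma dirDeriv (hF : CbSmooth F) (v : E) : CbSmooth (dirDeriv v F) := by
  have hfderiv : ∀ n : ℕ, ContDiff ℝ n (fderiv ℝ F) := fun n =>
    (hF.1 (n + 1)).fderiv_right (by norm_cast)
  have hcomp : _root_.dirDeriv v F = ContinuousLinearMap.apply ℝ ℝ v ∘ fderiv ℝ F := rfl
  refine ⟨fun n => hcomp ▸ (ContinuousLinearMap.apply ℝ ℝ v).contDiff.comp (hfderiv n),
    fun k => ?_⟩
  obtain ⟨M, hM⟩ := hF.2 (k + 1)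
  refine ⟨‖ContinuousLinearMap.apply ℝ ℝ v‖ * M, fun p => ?_⟩
  rw [hcomp, ContinuousLinearMap.iteratedFDeriv_comp_left _ (hfderiv k).contDiffAt le_rfl]
  refine (ContinuousLinearMap.norm_compContinuousMultilinearMap_le _ _).trans ?_
  rw [norm_iteratedFDeriv_fderiv]
  gcongr
  exact hM p

lemma iterate_dirDeriv (hF : CbSmooth F) (v : E) (n : ℕ) :
    CbSmooth ((_root_.dirDeriv v)^[n] F) := by
  induction n with
  | zero => exact hF
  | succ n ih => rw [Function.iterate_succ_apply']; exact ih.dirDeriv v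

lemma iteratedDeriv_comp_prodMk {F : ℝ × ℝ → ℝ} (hF : CbSmooth F) (l : ℕ) (x y : ℝ) :
    iteratedDeriv l (fun v => F (x, v)) y = (_root_.dirDeriv (0, 1))^[l] F (x, y) := by
  induction l generalizing F with
  | zero => rfl
  | succ l ih =>
    have hderiv : deriv (fun v => F (x, v)) = fun v => _root_.dirDeriv (0, 1) F (x, v) := by
      funext v
      exact ((hF.differentiable _).hasFDerivAt.comp_hasDerivAt v
        ((hasDerivAt_const v x).prodMk (hasDerivAt_id v))).deriv
    rw [iteratedDeriv_succ', hderiv, ih (hF.dirDeriv _), Function.iterate_succ_apply]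

lemma iteratedDeriv_comp_prodMk_left {F : ℝ × ℝ → ℝ} (hF : CbSmooth F) (k : ℕ) (x y : ℝ) :
    iteratedDeriv k (fun u => F (u, y)) x = (_root_.dirDeriv (1, 0))^[k] F (x, y) := by
  induction k generalizing F with
  | zero => rfl
  | succ k ih =>
    have hderiv : deriv (fun u => F (u, y)) = fun u => _root_.dirDeriv (1, 0) F (u, y) := by
      funext u
      exact ((hF.differentiable _).hasFDerivAt.comp_hasDerivAt u
        ((hasDerivAt_id u).prodMk (hasDerivAt_const u y))).deriv
    rw [iteratedDeriv_succ', hderiv, ih (hF.dirDeriv _), Function.iterate_succ_apply]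

end CbSmooth

lemma CbSmooth2.pd_eq {f : ℝ → ℝ → ℝ} (hf : CbSmooth2 f) (k l : ℕ) (x y : ℝ) :
    pd k l f x y =
      (dirDeriv (1, 0))^[k] ((dirDeriv (0, 1))^[l] fun p : ℝ × ℝ => f p.1 p.2) (x, y) := by
  simp only [pd, hf.iteratedDeriv_comp_prodMk]
  exact (hf.iterate_dirDeriv _ l).iteratedDeriv_comp_prodMk_left k x y

/-- The lag-`m` part of the quadratic form `∑_{j,k<N} a_j a_k`. -/
def laggedSum {R : Type*} [CommSemiring R] (a : ℕ → R) (N m : ℕ) : R :=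
  ∑ i ∈ range (N - m), a i * a (i + m)

section
variable {R : Type*} [CommSemiring R]

lemma sum_sum_ite_sub_eq_natCast (a : ℕ → R) (N m : ℕ) :
    ∑ j ∈ range N, ∑ k ∈ range N, (if (j : ℤ) - k = m then a j * a k else 0) =
      laggedSum a N m := by
  have hinner : ∀ j ∈ range N, ∑ k ∈ range N, (if (j : ℤ) - k = m then a j * a k else 0) =
      if j ∈ Ico m N then a j * a (j - m) else 0 := by
    intro j hj
    rw [mem_range] at hj
    rw [sum_eq_single (j - m)]
    · split_ifs with h1 h2 h2 <;> first | rfl | (simp only [mem_Ico] at h2; omega)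
    · intro k _ hk
      rw [if_neg (by omega)]
    · intro h
      rw [mem_range] at h
      rw [if_neg (by omega)]
  rw [sum_congr rfl hinner, sum_ite_mem, inter_eq_right.2 fun x hx => by
    simp only [mem_Ico, mem_range] at hx ⊢; omega, laggedSum, sum_Ico_eq_sum_range]
  exact sum_congr rfl fun i _ => by rw [Nat.add_sub_cancel_left, mul_comm, add_comm]

lemma sum_sum_ite_sub_eq (a : ℕ → R) (N : ℕ) (r : ℤ) :
    ∑ j ∈ range N, ∑ k ∈ range N, (if (j : ℤ) - k = r then a j * a k else 0) =
      laggedSum a N r.natAbs := by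
  obtain ⟨m, rfl | rfl⟩ := Int.eq_nat_or_neg r
  · exact sum_sum_ite_sub_eq_natCast a N m
  · rw [sum_comm, Int.natAbs_neg, Int.natAbs_natCast, ← sum_sum_ite_sub_eq_natCast a N m]
    refine sum_congr rfl fun j _ => sum_congr rfl fun k _ => ?_
    simp only [mul_comm (a k)]
    congr 1
    apply propext; omega
end

lemma sum_sum_mul_eq_tsum_mul_laggedSum {R : Type*} [CommSemiring R] [TopologicalSpace R]
    [ContinuousAdd R] [T2Space R] (a : ℕ → R) (w : ℤ → R) (N : ℕ) :
    ∑ j ∈ range N, ∑ k ∈ range N, a j * a k * w (j - k) =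
      ∑' r : ℤ, w r * laggedSum a N r.natAbs := by
  have hterm : ∀ j k : ℕ, a j * a k * w (j - k) =
      ∑' r : ℤ, w r * (if (j : ℤ) - k = r then a j * a k else 0) := by
    intro j k
    rw [tsum_eq_single ((j : ℤ) - k) fun r hr => by rw [if_neg (Ne.symm hr), mul_zero]]
    simp [mul_comm]
  have hsummable : ∀ j k : ℕ,
      Summable fun r : ℤ => w r * (if (j : ℤ) - k = r then a j * a k else 0) := fun j k =>
    summable_of_ne_finset_zero (s := {(j : ℤ) - k}) fun r hr => by
      rw [mem_singleton] at hr
      rw [if_neg (Ne.symm hr), mul_zero]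
  simp_rw [hterm, ← sum_sum_ite_sub_eq, mul_sum]
  rw [Summable.tsum_finsetSum fun j _ => summable_sum fun k _ => hsummable j k]
  exact sum_congr rfl fun j _ => (Summable.tsum_finsetSum fun k _ => hsummable j k).symm

lemma abs_laggedSum_le {a : ℕ → ℝ} {M : ℝ} (ha : ∀ k, |a k| ≤ M) (N m : ℕ) :
    |laggedSum a N m| ≤ N * M ^ 2 := by
  have hM : 0 ≤ M := (abs_nonneg _).trans (ha 0)
  refine (abs_sum_le_sum_abs _ _).trans ?_
  calc ∑ i ∈ range (N - m), |a i * a (i + m)| ≤ ∑ i ∈ range (N - m), M ^ 2 :=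
        sum_le_sum fun i _ => by rw [abs_mul, sq]; exact mul_le_mul (ha _) (ha _) (abs_nonneg _) hM
    _ ≤ N * M ^ 2 := by
        rw [sum_const, card_range, nsmul_eq_mul]
        gcongr
        exact Nat.sub_le _ _

lemma abs_mul_laggedSum_le {a : ℕ → ℝ} {M d t : ℝ} {N : ℕ} (ha : ∀ k, |a k| ≤ M) (hd : 0 ≤ d)
    (hNt : N * d ≤ t) (m : ℕ) : |d * laggedSum a N m| ≤ t * M ^ 2 := by
  rw [abs_mul, abs_of_nonneg hd]
  calc d * |laggedSum a N m| ≤ d * (N * M ^ 2) :=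
        mul_le_mul_of_nonneg_left (abs_laggedSum_le ha N m) hd
    _ = N * d * M ^ 2 := by ring
    _ ≤ t * M ^ 2 := by gcongr

lemma continuousOn_comp_midpoints {ψ : ℝ × ℝ → ℝ} (hψ : Continuous ψ) {x1 x2 : ℝ → ℝ}
    (hx1 : ContinuousOn x1 (Set.Ici 0)) (hx2 : ContinuousOn x2 (Set.Ici 0)) (t : ℝ) :
    ContinuousOn (fun s : ℝ × ℝ => ψ ((x1 s.2 + x1 s.1) / 2, (x2 s.2 + x2 s.1) / 2))
      (Set.Icc 0 t ×ˢ Set.Icc 0 t) := by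
  have hmid : ∀ x : ℝ → ℝ, ContinuousOn x (Set.Ici 0) →
      ContinuousOn (fun s : ℝ × ℝ => (x s.2 + x s.1) / 2) (Set.Icc 0 t ×ˢ Set.Icc 0 t) :=
    fun x hx => ((hx.comp continuousOn_snd fun s hs => hs.2.1).add
      (hx.comp continuousOn_fst fun s hs => hs.1.1)).div_const 2
  exact hψ.comp_continuousOn ((hmid x1 hx1).prodMk (hmid x2 hx2))

lemma abs_mul_sum_sub_integral_le {G : ℝ → ℝ} {v : ℕ → ℝ} {d ε : ℝ} {N : ℕ} (hd : 0 ≤ d)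
    (hG : IntegrableOn G (Set.Icc 0 (N * d)))
    (hv : ∀ j < N, ∀ s ∈ Set.Icc (j * d) ((j + 1) * d), |v j - G s| ≤ ε) :
    |d * ∑ j ∈ range N, v j - ∫ s in (0 : ℝ)..N * d, G s| ≤ N * d * ε := by
  have hcell : ∀ j < N, Set.uIcc ((j : ℝ) * d) ((j + 1 : ℕ) * d) ⊆ Set.Icc 0 (N * d) := by
    intro j hj
    rw [Set.uIcc_of_le (by gcongr; simp)]
    exact Set.Icc_subset_Icc (by positivity) (by gcongr; exact_mod_cast hj)
  have hsplit := intervalIntegral.sum_integral_adjacent_intervals (a := fun j : ℕ => (j : ℝ) * d)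
    fun j hj => (hG.mono_set (hcell j hj)).intervalIntegrable
  simp only [Nat.cast_zero, zero_mul] at hsplit
  have hcell_err : ∀ j ∈ range N,
      |d * v j - ∫ s in (j : ℝ) * d..(j + 1 : ℕ) * d, G s| ≤ d * ε := by
    intro j hj
    rw [mem_range] at hj
    have hlen : ((j + 1 : ℕ) : ℝ) * d - j * d = d := by push_cast; ring
    have hconst : d * v j = ∫ _ in (j : ℝ) * d..(j + 1 : ℕ) * d, v j := by
      rw [intervalIntegral.integral_const, hlen, smul_eq_mul]
    rw [hconst, ← intervalIntegral.integral_sub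
      intervalIntegrable_const (hG.mono_set (hcell j hj)).intervalIntegrable, ← Real.norm_eq_abs]
    refine (intervalIntegral.norm_integral_le_of_norm_le_const fun s hs => ?_).trans_eq
      (by rw [hlen, abs_of_nonneg hd, mul_comm])
    rw [Set.uIoc_of_le (by gcongr; simp)] at hs
    exact hv j hj s ⟨hs.1.le, by exact_mod_cast hs.2⟩
  rw [← hsplit, mul_sum, ← sum_sub_distrib]
  refine (abs_sum_le_sum_abs _ _).trans ((sum_le_sum hcell_err).trans_eq ?_)
  rw [sum_const, card_range, nsmul_eq_mul, mul_assoc]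

lemma tendsto_riemannSum {G : ℝ → ℝ} {t : ℝ} (hG : ContinuousOn G (Set.Icc 0 t))
    {d : ℕ → ℝ} {N : ℕ → ℕ} {v : ℕ → ℕ → ℝ} (hd : ∀ n, 0 ≤ d n) (hNt : ∀ n, N n * d n ≤ t)
    (hlim : Tendsto (fun n => N n * d n) atTop (𝓝 t))
    (hv : ∀ ε > 0, ∀ᶠ n in atTop, ∀ j < N n, ∀ s ∈ Set.Icc (j * d n) ((j + 1) * d n),
      |v n j - G s| ≤ ε) :
    Tendsto (fun n => d n * ∑ j ∈ range (N n), v n j) atTop (𝓝 (∫ s in (0 : ℝ)..t, G s)) := by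
  have ht : 0 ≤ t := (mul_nonneg (N 0).cast_nonneg (hd 0)).trans (hNt 0)
  have hmem : ∀ n, (N n : ℝ) * d n ∈ Set.Icc 0 t := fun n =>
    ⟨mul_nonneg (N n).cast_nonneg (hd n), hNt n⟩
  have hprimitive : Tendsto (fun n => ∫ s in (0 : ℝ)..N n * d n, G s) atTop
      (𝓝 (∫ s in (0 : ℝ)..t, G s)) := by
    have hcont := intervalIntegral.continuousOn_primitive_interval
      (μ := volume) (a := 0) (b := t) (by rw [Set.uIcc_of_le ht]; exact hG.integrableOn_Icc)
    rw [Set.uIcc_of_le ht] at hcont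
    exact (hcont t ⟨ht, le_rfl⟩).tendsto.comp
      (tendsto_nhdsWithin_iff.2 ⟨hlim, Eventually.of_forall hmem⟩)
  have herror : Tendsto (fun n => d n * ∑ j ∈ range (N n), v n j -
      ∫ s in (0 : ℝ)..N n * d n, G s) atTop (𝓝 0) := by
    rw [Metric.tendsto_nhds]
    intro ε hε
    filter_upwards [hv (ε / (2 * (t + 1))) (by positivity)] with n hn
    rw [Real.dist_eq, sub_zero]
    refine (abs_mul_sum_sub_integral_le (hd n)
      ((hG.mono (Set.Icc_subset_Icc le_rfl (hNt n))).integrableOn_Icc) hn).trans_lt ?_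
    calc (N n : ℝ) * d n * (ε / (2 * (t + 1))) ≤ t * (ε / (2 * (t + 1))) := by
          gcongr; exact hNt n
      _ < ε := by
          rw [mul_div_assoc', div_lt_iff₀ (by positivity)]
          nlinarith
  simpa using herror.add hprimitive

section
variable {Θ : ℝ × ℝ → ℝ} {t : ℝ} {d : ℕ → ℝ} {N : ℕ → ℕ}

lemma eventually_abs_sample_sub_diag_lt (hΘ : ContinuousOn Θ (Set.Icc 0 t ×ˢ Set.Icc 0 t))
    (hd : ∀ n, 0 ≤ d n) (hd0 : Tendsto d atTop (𝓝 0)) (hNt : ∀ n, N n * d n ≤ t)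
    (m : ℕ) {ε : ℝ} (hε : 0 < ε) :
    ∀ᶠ n in atTop, ∀ i k : ℕ, i ≤ k → k ≤ i + m → k + 1 ≤ N n →
      ∀ s ∈ Set.Icc (i * d n) ((i + 1) * d n),
        |Θ (k * d n, (k + 1 : ℕ) * d n) - Θ (s, s)| < ε := by
  obtain ⟨δ, hδ, hΘδ⟩ := Metric.uniformContinuousOn_iff.1
    ((isCompact_Icc.prod isCompact_Icc).uniformContinuousOn_of_continuous hΘ) ε hε
  have hsmall : ∀ᶠ n in atTop, (m + 1) * d n < δ := by
    simpa using (hd0.const_mul ((m : ℝ) + 1)).eventually_lt_const (by simpa using hδ)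
  filter_upwards [hsmall] with n hn i k hik hki hkN s hs
  have hik' : (i : ℝ) * d n ≤ k * d n := by gcongr; exact hd n
  have hki' : (k : ℝ) * d n ≤ (i + m) * d n := by gcongr; exact hd n; exact_mod_cast hki
  have hkN' : ((k + 1 : ℕ) : ℝ) * d n ≤ t :=
    (mul_le_mul_of_nonneg_right (by exact_mod_cast hkN) (hd n)).trans (hNt n)
  push_cast at hkN' ⊢
  have hi0 : 0 ≤ (i : ℝ) * d n := mul_nonneg i.cast_nonneg (hd n)
  rw [← Real.dist_eq]
  refine hΘδ _ ⟨⟨hi0.trans hik', by nlinarith [hd n]⟩, ⟨by nlinarith [hd n], hkN'⟩⟩ _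
    ⟨⟨hi0.trans hs.1, by nlinarith [hs.2]⟩, ⟨hi0.trans hs.1, by nlinarith [hs.2]⟩⟩ ?_
  rw [Prod.dist_eq, Real.dist_eq, Real.dist_eq, max_lt_iff, abs_lt, abs_lt]
  obtain ⟨hs1, hs2⟩ := hs
  refine ⟨⟨?_, ?_⟩, ?_, ?_⟩ <;> nlinarith [hd n]

lemma tendsto_mul_laggedSum (hΘ : ContinuousOn Θ (Set.Icc 0 t ×ˢ Set.Icc 0 t))
    (hd : ∀ n, 0 ≤ d n) (hd0 : Tendsto d atTop (𝓝 0)) (hNt : ∀ n, N n * d n ≤ t)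
    (hlim : Tendsto (fun n => N n * d n) atTop (𝓝 t)) (m : ℕ) :
    Tendsto (fun n => d n * laggedSum (fun k => Θ (k * d n, (k + 1 : ℕ) * d n)) (N n) m) atTop
      (𝓝 (∫ s in (0 : ℝ)..t, Θ (s, s) ^ 2)) := by
  have ht : 0 ≤ t := (mul_nonneg (N 0).cast_nonneg (hd 0)).trans (hNt 0)
  obtain ⟨C, hC⟩ := (isCompact_Icc.prod isCompact_Icc).exists_bound_of_continuousOn hΘ
  have hdiag : ∀ s ∈ Set.Icc 0 t, (s, s) ∈ Set.Icc 0 t ×ˢ Set.Icc 0 t := fun s hs => ⟨hs, hs⟩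
  have hNmt : ∀ n, ((N n - m : ℕ) : ℝ) * d n ≤ N n * d n := fun n => by
    gcongr; exact hd n; exact Nat.sub_le _ _
  refine tendsto_riemannSum ((hΘ.comp (continuousOn_id.prodMk continuousOn_id) hdiag).pow 2) hd
    (fun n => (hNmt n).trans (hNt n)) ?_ fun ε hε => ?_
  · refine tendsto_of_tendsto_of_tendsto_of_le_of_le (g := fun n => N n * d n - m * d n)
      (by simpa using hlim.sub (hd0.const_mul (m : ℝ))) hlim (fun n => ?_) hNmt
    have hcast : (N n : ℝ) - m ≤ (N n - m : ℕ) := by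
      rw [sub_le_iff_le_add]; exact_mod_cast le_tsub_add
    show (N n : ℝ) * d n - m * d n ≤ _
    rw [← sub_mul]; gcongr; exact hd n
  · set ε' := ε / (2 * (|C| + 1)) with hε'
    filter_upwards [eventually_abs_sample_sub_diag_lt hΘ hd hd0 hNt m (by positivity : 0 < ε')]
      with n hn i hi s hs
    have hiN : i + m + 1 ≤ N n := by omega
    have hi0 : 0 ≤ (i : ℝ) * d n := mul_nonneg i.cast_nonneg (hd n)
    have hit : ((i + 1 : ℕ) : ℝ) * d n ≤ t := (mul_le_mul_of_nonneg_right
      (by exact_mod_cast (by omega : i + 1 ≤ N n)) (hd n)).trans (hNt n)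
    have hst : s ∈ Set.Icc 0 t := ⟨hi0.trans hs.1, hs.2.trans (by push_cast at hit; exact hit)⟩
    have hCle : C ≤ |C| + 1 := (le_abs_self C).trans (by linarith)
    have hb : |Θ (s, s)| ≤ |C| + 1 := (hC _ (hdiag s hst)).trans hCle
    have hp : |Θ (i * d n, (i + 1 : ℕ) * d n)| ≤ |C| + 1 := by
      refine (hC _ ⟨⟨hi0, ?_⟩, ⟨mul_nonneg (Nat.cast_nonneg _) (hd n), hit⟩⟩).trans hCle
      push_cast at hit ⊢
      nlinarith [hd n]
    have hpb := hn i i le_rfl (by omega) (by omega) s hs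
    have hqb := hn i (i + m) (by omega) le_rfl hiN s hs
    set p := Θ (i * d n, (i + 1 : ℕ) * d n)
    set q := Θ ((i + m : ℕ) * d n, (i + m + 1 : ℕ) * d n)
    set b := Θ (s, s)
    calc |p * q - b ^ 2| = |p * (q - b) + b * (p - b)| := by ring_nf
      _ ≤ |p| * |q - b| + |b| * |p - b| := by rw [← abs_mul, ← abs_mul]; exact abs_add_le _ _
      _ ≤ (|C| + 1) * ε' + (|C| + 1) * ε' := by gcongr
      _ = ε := by rw [hε']; field_simp; ring
end

lemma tendsto_tsum_mul_of_abs_le {α β : Type*} {l : Filter α} {w : β → ℝ}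
    (hw : Summable fun r => |w r|) {c : α → β → ℝ} {L C : ℝ}
    (hc : ∀ r, Tendsto (fun n => c n r) l (𝓝 L)) (hC : ∀ n r, |c n r| ≤ C) :
    Tendsto (fun n => ∑' r, w r * c n r) l (𝓝 ((∑' r, w r) * L)) := by
  rw [← tsum_mul_right]
  refine tendsto_tsum_of_dominated_convergence (hw.mul_right C) (fun r => (hc r).const_mul _)
    (Eventually.of_forall fun n r => ?_)
  rw [norm_mul, Real.norm_eq_abs, Real.norm_eq_abs]
  gcongr
  exact hC n r

lemma tendsto_two_rpow_neg_half : Tendsto (fun n : ℕ => (2 : ℝ) ^ (-(n : ℝ) / 2)) atTop (𝓝 0) := by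
  have hgeom :
      (fun n : ℕ => (2 : ℝ) ^ (-(n : ℝ) / 2)) = fun n => ((2 : ℝ) ^ (-(1 : ℝ) / 2)) ^ n := by
    funext n
    rw [← Real.rpow_natCast, ← Real.rpow_mul zero_le_two]
    ring_nf
  rw [hgeom]
  exact tendsto_pow_atTop_nhds_zero_of_lt_one (by positivity)
    (Real.rpow_lt_one_of_one_lt_of_neg one_lt_two (by norm_num))

lemma nSteps_mul_mem_Ioc {t : ℝ} (ht : 0 ≤ t) (n : ℕ) :
    (nSteps n t : ℝ) * 2 ^ (-(n : ℝ) / 2) ∈ Set.Ioc (t - 2 ^ (-(n : ℝ) / 2)) t := by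
  have hinv : t = (2 : ℝ) ^ ((n : ℝ) / 2) * t * 2 ^ (-(n : ℝ) / 2) := by
    rw [mul_right_comm, ← Real.rpow_add two_pos]; ring_nf; rw [Real.rpow_zero, one_mul]
  have hd : (0 : ℝ) < 2 ^ (-(n : ℝ) / 2) := by positivity
  constructor
  · have := mul_lt_mul_of_pos_right (Nat.lt_floor_add_one ((2 : ℝ) ^ ((n : ℝ) / 2) * t)) hd
    rw [← hinv] at this
    rw [nSteps]; linarith
  · conv_rhs => rw [hinv]
    exact mul_le_mul_of_nonneg_right (Nat.floor_le (by positivity)) hd.le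

lemma tendsto_nSteps_mul {t : ℝ} (ht : 0 ≤ t) :
    Tendsto (fun n => (nSteps n t : ℝ) * 2 ^ (-(n : ℝ) / 2)) atTop (𝓝 t) :=
  tendsto_of_tendsto_of_tendsto_of_le_of_le
    (by simpa using tendsto_two_rpow_neg_half.const_sub t) tendsto_const_nhds
    (fun n => (nSteps_mul_mem_Ioc ht n).1.le) fun n => (nSteps_mul_mem_Ioc ht n).2

theorem conditional_variance_convergence
    (x1 x2 : ℝ → ℝ)
    (hx1 : ContinuousOn x1 (Set.Ici 0)) (hx2 : ContinuousOn x2 (Set.Ici 0))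
    (f : ℝ → ℝ → ℝ) (hf : CbSmooth2 f) (t : ℝ) (ht : 0 ≤ t) :
    Tendsto
      (fun n : ℕ =>
        1 / 32 * (2 : ℝ) ^ (-(n : ℝ) / 2) *
          (∑ j ∈ Finset.range (nSteps n t), ∑ k ∈ Finset.range (nSteps n t),
            (pd 1 2 f ((x1 (dyadicPt n (j + 1)) + x1 (dyadicPt n j)) / 2)
                ((x2 (dyadicPt n (j + 1)) + x2 (dyadicPt n j)) / 2) *
              pd 1 2 f ((x1 (dyadicPt n (k + 1)) + x1 (dyadicPt n k)) / 2)
                ((x2 (dyadicPt n (k + 1)) + x2 (dyadicPt n k)) / 2) *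
              rhoH (1 / 6) ((j : ℤ) - (k : ℤ)) ^ 3)))
      atTop
      (nhds (1 / 32 * (∑' r : ℤ, rhoH (1 / 6) r ^ 3) *
        ∫ u in (0 : ℝ)..t, pd 1 2 f (x1 u) (x2 u) ^ 2)) := by
  set ψ := (dirDeriv (1, 0))^[1] ((dirDeriv (0, 1))^[2] fun p : ℝ × ℝ => f p.1 p.2)
  have hψ : CbSmooth ψ := (hf.iterate_dirDeriv _ 2).iterate_dirDeriv _ 1
  have hpd : ∀ x y, pd 1 2 f x y = ψ (x, y) := hf.pd_eq 1 2
  obtain ⟨M, hM⟩ := hψ.exists_abs_le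
  have hρ : Summable fun r : ℤ => |rhoH (1 / 6) r ^ 3| := by
    simpa only [abs_pow] using summable_abs_rhoH_pow_three (H := 1 / 6) (by norm_num) (by norm_num)
  have hlim := tendsto_tsum_mul_of_abs_le hρ
    (fun r => tendsto_mul_laggedSum (continuousOn_comp_midpoints hψ.continuous hx1 hx2 t)
      (fun n => by positivity) tendsto_two_rpow_neg_half (fun n => (nSteps_mul_mem_Ioc ht n).2)
      (tendsto_nSteps_mul ht) r.natAbs)
    fun n r => abs_mul_laggedSum_le (fun k => hM _) (by positivity)
      (nSteps_mul_mem_Ioc ht n).2 _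
  convert hlim.const_mul (1 / 32) using 2 with n
  · rw [mul_assoc, tsum_congr fun r => mul_left_comm _ _ _, tsum_mul_left,
      ← sum_sum_mul_eq_tsum_mul_laggedSum]
    simp only [hpd]
    rfl
  · rw [mul_assoc]
    congr 2
    exact intervalIntegral.integral_congr fun u _ => by simp only [hpd, add_self_div_two]

end
end
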